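/- arXiv:1811.10260 — 4 statements merged into one kernel-verified Lean document; each statement's English description precedes it below -/
import Mathlib

section
/- Let A be a commutative filtered ring and f: M → N a morphism of filtered A-modules. Then f is strict (i.e. F^i N ∩ f(M) = f(F^i M) for all i) if and only if the sequence gr(ker f) → gr(M) → gr(N) is exact, and also if and only if the sequence 0 → gr(ker f) → gr(M) → gr(N) → gr(coker f) → 0 is exact. Here ker f and im f carry induced filtrations, and coker f the quotient filtration. -/
/-!
Strictness lets one correct an element of `F^i M` whose image lies in `F^{i+1} N` by an element
of `ker f`, which is exactness of `gr(ker f) → gr(M) → gr(N)`; dually it gives exactness at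
`gr(N)`. Conversely, if `f m ∈ F^i N` with `m ∈ F^j M`, `j < i`, exactness at `gr(M)` replaces
`m` by an element of `F^{j+1} M` with the same image; since the filtration of `M` is exhaustive,
finitely many such steps reach `F^i M`, which is strictness.
-/

namespace Submodule

variable {R M N : Type*} [Ring R] [AddCommGroup M] [Module R M] [AddCommGroup N]
  [Module R N] {FM : ℤ → Submodule R M} {FN : ℤ → Submodule R N} {f : M →ₗ[R] N}

theorem exists_ker_sub_mem_succ_of_strict (hFM : ∀ i, FM (i + 1) ≤ FM i)
    (hS : ∀ i, FN i ⊓ LinearMap.range f = (FM i).map f) (i : ℤ) (m : M) (hm : m ∈ FM i)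
    (hfm : f m ∈ FN (i + 1)) : ∃ m' ∈ FM i, f m' = 0 ∧ m - m' ∈ FM (i + 1) := by
  have hfm' : f m ∈ FN (i + 1) ⊓ LinearMap.range f := ⟨hfm, m, rfl⟩
  rw [hS] at hfm'
  obtain ⟨m₁, hm₁, hfm₁⟩ := hfm'
  refine ⟨m - m₁, sub_mem hm (hFM i hm₁), by rw [map_sub, hfm₁, sub_self], ?_⟩
  rwa [sub_sub_cancel]

theorem exists_sub_map_mem_succ_of_strict (hFN : ∀ i, FN (i + 1) ≤ FN i)
    (hS : ∀ i, FN i ⊓ LinearMap.range f = (FM i).map f) (i : ℤ) (n : N) (hn : n ∈ FN i)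
    (hcoker : ∃ n' ∈ FN (i + 1), n - n' ∈ LinearMap.range f) :
    ∃ m ∈ FM i, n - f m ∈ FN (i + 1) := by
  obtain ⟨n', hn', hrange⟩ := hcoker
  have hmem : n - n' ∈ FN i ⊓ LinearMap.range f := ⟨sub_mem hn (hFN i hn'), hrange⟩
  rw [hS] at hmem
  obtain ⟨m, hm, hfm⟩ := hmem
  exact ⟨m, hm, by rwa [hfm, sub_sub_cancel]⟩

theorem map_mem_map_of_exact_gr (hFN : ∀ i, FN (i + 1) ≤ FN i)
    (hexact : ∀ i : ℤ, ∀ m ∈ FM i, f m ∈ FN (i + 1) →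
      ∃ m' ∈ FM i, f m' = 0 ∧ m - m' ∈ FM (i + 1))
    {i j : ℤ} (hji : j ≤ i) {m : M} (hm : m ∈ FM j) (hfm : f m ∈ FN i) :
    f m ∈ (FM i).map f := by
  induction j, hji using Int.leInductionDown generalizing m with
  | base => exact mem_map_of_mem hm
  | pred j hji ih =>
    have hfm' : f m ∈ FN (j - 1 + 1) := by
      rw [sub_add_cancel]
      exact antitone_int_of_succ_le hFN hji hfm
    obtain ⟨m', -, hfm'₀, hmm'⟩ := hexact (j - 1) m hm hfm'
    rw [sub_add_cancel] at hmm'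
    have hf : f (m - m') = f m := by rw [map_sub, hfm'₀, sub_zero]
    exact hf ▸ ih hmm' (hf ▸ hfm)

theorem strict_of_exact_gr (hFN : ∀ i, FN (i + 1) ≤ FN i)
    (hFMex : ∃ a : ℤ, ∀ i ≤ a, FM i = ⊤) (hfil : ∀ i, (FM i).map f ≤ FN i)
    (hexact : ∀ i : ℤ, ∀ m ∈ FM i, f m ∈ FN (i + 1) →
      ∃ m' ∈ FM i, f m' = 0 ∧ m - m' ∈ FM (i + 1)) (i : ℤ) :
    FN i ⊓ LinearMap.range f = (FM i).map f := by
  refine le_antisymm ?_ (le_inf (hfil i) LinearMap.map_le_range)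
  rintro _ ⟨hfm, m, rfl⟩
  obtain ⟨a, ha⟩ := hFMex
  have hm : m ∈ FM (min a i) := by rw [ha _ (min_le_left a i)]; trivial
  exact map_mem_map_of_exact_gr hFN hexact (min_le_right a i) hm hfm

end Submodule

theorem stmt_3_general (A M N : Type*) [CommRing A]
    [AddCommGroup M] [Module A M] [AddCommGroup N] [Module A N]
    (FM : ℤ → Submodule A M) (FN : ℤ → Submodule A N)
    (hFMmono : ∀ i, FM (i + 1) ≤ FM i)
    (hFMex : ∃ a : ℤ, ∀ i ≤ a, FM i = ⊤)
    (hFNmono : ∀ i, FN (i + 1) ≤ FN i)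
    (f : M →ₗ[A] N) (hfil : ∀ i, (FM i).map f ≤ FN i) :
    -- exactness of `gr(ker f) → gr(M) → gr(N)` at `gr(M)`:
    -- a class of `gr^i(M)` killed in `gr^i(N)` comes from `gr^i(ker f)`
    ((∀ i, FN i ⊓ LinearMap.range f = (FM i).map f) ↔
        (∀ i : ℤ, ∀ m ∈ FM i, f m ∈ FN (i + 1) →
          ∃ m' ∈ FM i, f m' = 0 ∧ m - m' ∈ FM (i + 1))) ∧
    -- exactness of the five term sequence: the previous condition together with exactness
    -- at `gr(N)`: a class of `gr^i(N)` killed in `gr^i(coker f)` comes from `gr^i(M)`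
    ((∀ i, FN i ⊓ LinearMap.range f = (FM i).map f) ↔
        ((∀ i : ℤ, ∀ m ∈ FM i, f m ∈ FN (i + 1) →
            ∃ m' ∈ FM i, f m' = 0 ∧ m - m' ∈ FM (i + 1)) ∧
         (∀ i : ℤ, ∀ n ∈ FN i, (∃ n' ∈ FN (i + 1), n - n' ∈ LinearMap.range f) →
            ∃ m ∈ FM i, n - f m ∈ FN (i + 1)))) := by
  have exact_of_strict := Submodule.exists_ker_sub_mem_succ_of_strict (FN := FN) (f := f) hFMmono
  have strict_of_exact := Submodule.strict_of_exact_gr hFNmono hFMex hfil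
  exact ⟨⟨exact_of_strict, strict_of_exact⟩,
    ⟨fun hS ↦ ⟨exact_of_strict hS, Submodule.exists_sub_map_mem_succ_of_strict hFNmono hS⟩,
      fun h ↦ strict_of_exact h.1⟩⟩

/-- Let `A` be a commutative filtered ring and `f : M → N` a morphism of
filtered `A`-modules.  Then `f` is strict (`F^i N ∩ f(M) = f(F^i M)` for all `i`) iff
`gr(ker f) → gr(M) → gr(N)` is exact, iff
`0 → gr(ker f) → gr(M) → gr(N) → gr(coker f) → 0` is exact
(`ker f`, `im f` carry the induced filtrations and `coker f` the quotient filtration).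
Exactness of the graded sequences is spelled out elementwise; the exactness conditions at
`gr(ker f)` and at `gr(coker f)` hold automatically for the induced/quotient filtrations, and the
remaining conditions are exactness at `gr(M)` and at `gr(N)`. -/
theorem stmt_3 (A M N : Type*) [CommRing A]
    [AddCommGroup M] [Module A M] [AddCommGroup N] [Module A N]
    (FA : ℤ → Ideal A)
    (hFAmono : ∀ i, FA (i + 1) ≤ FA i) (hFAmul : ∀ i j, FA i * FA j ≤ FA (i + j))
    (hFAex : ∃ a : ℤ, ∀ i ≤ a, FA i = ⊤)
    (FM : ℤ → Submodule A M) (FN : ℤ → Submodule A N)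
    (hFMmono : ∀ i, FM (i + 1) ≤ FM i) (hFMsmul : ∀ i j, FA i • FM j ≤ FM (i + j))
    (hFMex : ∃ a : ℤ, ∀ i ≤ a, FM i = ⊤)
    (hFNmono : ∀ i, FN (i + 1) ≤ FN i) (hFNsmul : ∀ i j, FA i • FN j ≤ FN (i + j))
    (hFNex : ∃ a : ℤ, ∀ i ≤ a, FN i = ⊤)
    (f : M →ₗ[A] N) (hfil : ∀ i, (FM i).map f ≤ FN i) :
    -- exactness of `gr(ker f) → gr(M) → gr(N)` at `gr(M)`:
    -- a class of `gr^i(M)` killed in `gr^i(N)` comes from `gr^i(ker f)`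
    ((∀ i, FN i ⊓ LinearMap.range f = (FM i).map f) ↔
        (∀ i : ℤ, ∀ m ∈ FM i, f m ∈ FN (i + 1) →
          ∃ m' ∈ FM i, f m' = 0 ∧ m - m' ∈ FM (i + 1))) ∧
    -- exactness of the five term sequence: the previous condition together with exactness
    -- at `gr(N)`: a class of `gr^i(N)` killed in `gr^i(coker f)` comes from `gr^i(M)`
    ((∀ i, FN i ⊓ LinearMap.range f = (FM i).map f) ↔
        ((∀ i : ℤ, ∀ m ∈ FM i, f m ∈ FN (i + 1) →
            ∃ m' ∈ FM i, f m' = 0 ∧ m - m' ∈ FM (i + 1)) ∧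
         (∀ i : ℤ, ∀ n ∈ FN i, (∃ n' ∈ FN (i + 1), n - n' ∈ LinearMap.range f) →
            ∃ m ∈ FM i, n - f m ∈ FN (i + 1)))) :=
  stmt_3_general A M N FM FN hFMmono hFMex hFNmono f hfil
end

section
/- Let k be a field and 0 → M → N → P → 0 a sequence of finite dimensional discretely filtered k-vector spaces which is exact as a sequence of k-vector spaces, with both maps filtered (f: M → N, g: N → P). If f is strict then Σ_i i·dim gr^i(N) ≤ Σ_i i·dim gr^i(M) + Σ_i i·dim gr^i(P); if g is strict then the reverse inequality holds. If one of f, g is strict and equality holds, then the sequence is exact as filtered vector spaces, i.e. 0 → gr(M) → gr(N) → gr(P) → 0 is exact. -/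
/-!
Put `e i = dim F^i N - dim F^i M - dim F^i P`. Summation by parts turns
`∑ i·dim gr^i N - ∑ i·dim gr^i M - ∑ i·dim gr^i P` into `∑ i, e i`. Rank–nullity for `g`
restricted to `F^i N`, together with `ker g = f M`, gives
`e i = (dim (F^i N ∩ f M) - dim F^i M) - (dim F^i P - dim g(F^i N))`, a difference of two
nonnegative defects which vanish exactly when `f`, resp. `g`, is strict in degree `i`.
Strictness of one map kills one defect and so fixes the sign of every `e i`. If moreover the
weights add up, then every `e i` vanishes, so both maps are strict, and strictness of both maps
is exactness of `0 → gr M → gr N → gr P → 0`.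
-/

open Module Filter Function

theorem Int.hasFiniteSupport_of_eventually_eq_zero {R : Type*} [Zero R] {e : ℤ → R}
    (hbot : ∀ᶠ i in atBot, e i = 0) (htop : ∀ᶠ i in atTop, e i = 0) : HasFiniteSupport e :=
  eventually_cofinite.1 <| Int.cofinite_eq ▸ eventually_sup.2 ⟨hbot, htop⟩

/-- Summation by parts on `ℤ`. -/
theorem finsum_intCast_mul_sub_succ_eq_finsum {R : Type*} [CommRing R] {e : ℤ → R}
    (he : HasFiniteSupport e) : ∑ᶠ i : ℤ, (i : R) * (e i - e (i + 1)) = ∑ᶠ i, e i := by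
  have hshift (h : ℤ → R) : ∑ᶠ i, h (i + 1) = ∑ᶠ i, h i := finsum_comp_equiv (Equiv.addRight 1)
  have he₁ : HasFiniteSupport fun i => e (i + 1) := he.comp_of_injective (add_left_injective 1)
  have hie : HasFiniteSupport fun i : ℤ => (i : R) * e i :=
    he.subset (support_mul_subset_right _ _)
  have hie₁ : HasFiniteSupport fun i : ℤ => ((i + 1 : ℤ) : R) * e (i + 1) :=
    he₁.subset (support_mul_subset_right _ _)
  have hdiff : HasFiniteSupport fun i : ℤ => (i : R) * e i - ((i + 1 : ℤ) : R) * e (i + 1) :=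
    hie.sub hie₁
  calc ∑ᶠ i : ℤ, (i : R) * (e i - e (i + 1))
      = ∑ᶠ i : ℤ, ((i * e i - ((i + 1 : ℤ) : R) * e (i + 1)) + e (i + 1)) := by
        congr 1; ext i; push_cast; ring
    _ = ∑ᶠ i, e i := by
        rw [finsum_add_distrib hdiff he₁, finsum_sub_distrib hie hie₁,
          hshift fun i => (i : R) * e i, hshift e, sub_self, zero_add]

theorem finsum_nonpos {α G : Type*} [AddCommGroup G] [PartialOrder G] [IsOrderedAddMonoid G]
    {e : α → G} (h : ∀ i, e i ≤ 0) : ∑ᶠ i, e i ≤ 0 := by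
  simpa [finsum_neg_distrib] using finsum_nonneg fun i => neg_nonneg.2 (h i)

theorem eq_zero_of_finsum_eq_zero_of_nonneg {α M : Type*} [AddCommMonoid M] [PartialOrder M]
    [IsOrderedCancelAddMonoid M] {e : α → M} (he : HasFiniteSupport e) (h : ∀ i, 0 ≤ e i)
    (hsum : ∑ᶠ i, e i = 0) (i : α) : e i = 0 := by
  by_contra hi
  exact (finsum_pos h ⟨i, (h i).lt_of_ne' hi⟩ he).ne' hsum

theorem eq_zero_of_finsum_eq_zero_of_nonpos {α G : Type*} [AddCommGroup G] [PartialOrder G]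
    [IsOrderedAddMonoid G] {e : α → G} (he : HasFiniteSupport e) (h : ∀ i, e i ≤ 0)
    (hsum : ∑ᶠ i, e i = 0) (i : α) : e i = 0 :=
  neg_eq_zero.1 <| eq_zero_of_finsum_eq_zero_of_nonneg he.neg (fun i => neg_nonneg.2 (h i))
    (by rw [← neg_zero, ← hsum, ← finsum_neg_distrib]; rfl) i

section Filtration

variable {k V : Type*} [Field k] [AddCommGroup V] [Module k V]

/-- `∑ i, i * dim gr^i V` for the filtration `F` of `V`. -/
noncomputable def filtrationWeight (F : ℤ → Submodule k V) : ℤ :=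
  ∑ᶠ i : ℤ, i * ((finrank k (F i) : ℤ) - (finrank k (F (i + 1)) : ℤ))

theorem hasFiniteSupport_mul_finrank_sub_finrank_succ {F : ℤ → Submodule k V}
    (htop : ∀ᶠ i in atBot, F i = ⊤) (hbot : ∀ᶠ i in atTop, F i = ⊥) :
    HasFiniteSupport fun i : ℤ => i * ((finrank k (F i) : ℤ) - (finrank k (F (i + 1)) : ℤ)) := by
  apply Int.hasFiniteSupport_of_eventually_eq_zero
  · filter_upwards [htop, (tendsto_atBot_add_const_right _ 1 tendsto_id).eventually htop]
      with i h h₁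
    rw [h, show F (i + 1) = ⊤ from h₁, sub_self, mul_zero]
  · filter_upwards [hbot, (tendsto_atTop_add_const_right _ 1 tendsto_id).eventually hbot]
      with i h h₁
    rw [h, show F (i + 1) = ⊥ from h₁, sub_self, mul_zero]

end Filtration

section ThreeFiltrations

variable {k M N P : Type*} [Field k] [AddCommGroup M] [Module k M]
  [AddCommGroup N] [Module k N] [AddCommGroup P] [Module k P]
  {FM : ℤ → Submodule k M} {FN : ℤ → Submodule k N} {FP : ℤ → Submodule k P}

theorem hasFiniteSupport_finrank_sub_finrank_sub_finrank
    (hFMtop : ∀ᶠ i in atBot, FM i = ⊤) (hFMbot : ∀ᶠ i in atTop, FM i = ⊥)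
    (hFNtop : ∀ᶠ i in atBot, FN i = ⊤) (hFNbot : ∀ᶠ i in atTop, FN i = ⊥)
    (hFPtop : ∀ᶠ i in atBot, FP i = ⊤) (hFPbot : ∀ᶠ i in atTop, FP i = ⊥)
    (hrank : finrank k N = finrank k M + finrank k P) :
    HasFiniteSupport fun i => (finrank k (FN i) : ℤ) - finrank k (FM i) - finrank k (FP i) := by
  apply Int.hasFiniteSupport_of_eventually_eq_zero
  · filter_upwards [hFMtop, hFNtop, hFPtop] with i hM hN hP
    rw [hM, hN, hP, finrank_top, finrank_top, finrank_top, hrank]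
    push_cast; ring
  · filter_upwards [hFMbot, hFNbot, hFPbot] with i hM hN hP
    rw [hM, hN, hP, finrank_bot, finrank_bot, finrank_bot]
    rfl

theorem filtrationWeight_sub_filtrationWeight_sub_filtrationWeight
    (hFMtop : ∀ᶠ i in atBot, FM i = ⊤) (hFMbot : ∀ᶠ i in atTop, FM i = ⊥)
    (hFNtop : ∀ᶠ i in atBot, FN i = ⊤) (hFNbot : ∀ᶠ i in atTop, FN i = ⊥)
    (hFPtop : ∀ᶠ i in atBot, FP i = ⊤) (hFPbot : ∀ᶠ i in atTop, FP i = ⊥)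
    (he : HasFiniteSupport fun i =>
      (finrank k (FN i) : ℤ) - finrank k (FM i) - finrank k (FP i)) :
    filtrationWeight FN - filtrationWeight FM - filtrationWeight FP =
      ∑ᶠ i, ((finrank k (FN i) : ℤ) - finrank k (FM i) - finrank k (FP i)) := by
  have hM := hasFiniteSupport_mul_finrank_sub_finrank_succ hFMtop hFMbot
  have hN := hasFiniteSupport_mul_finrank_sub_finrank_succ hFNtop hFNbot
  have hP := hasFiniteSupport_mul_finrank_sub_finrank_succ hFPtop hFPbot
  rw [← finsum_intCast_mul_sub_succ_eq_finsum he, filtrationWeight, filtrationWeight,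
    filtrationWeight, ← finsum_sub_distrib hN hM, ← finsum_sub_distrib _ hP]
  · congr 1; ext i; push_cast; ring
  · exact hN.sub hM

end ThreeFiltrations

section ShortExact

variable {k M N P : Type*} [Field k] [AddCommGroup M] [Module k M]
  [AddCommGroup N] [Module k N] [FiniteDimensional k N] [AddCommGroup P] [Module k P]
  {f : M →ₗ[k] N} {g : N →ₗ[k] P} {A : Submodule k M} {B : Submodule k N} {C : Submodule k P}

theorem Submodule.finrank_eq_finrank_inf_ker_add_finrank_map (g : N →ₗ[k] P)
    (S : Submodule k N) :
    finrank k S = finrank k ↥(S ⊓ LinearMap.ker g) + finrank k ↥(S.map g) := by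
  have h := LinearMap.finrank_range_add_finrank_ker (g ∘ₗ S.subtype)
  rw [LinearMap.range_comp, Submodule.range_subtype, LinearMap.ker_comp,
    ← Submodule.finrank_map_subtype_eq, Submodule.map_comap_subtype] at h
  omega

theorem finrank_eq_finrank_add_finrank_of_exact (hfinj : Injective f) (hgsurj : Surjective g)
    (hexact : LinearMap.range f = LinearMap.ker g) :
    finrank k N = finrank k M + finrank k P := by
  have h := Submodule.finrank_eq_finrank_inf_ker_add_finrank_map g ⊤
  rwa [finrank_top, top_inf_eq, ← hexact, LinearMap.finrank_range_of_inj hfinj, Submodule.map_top,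
    LinearMap.range_eq_top.2 hgsurj, finrank_top] at h

theorem finrank_eq_finrank_add_finrank_map_of_inf_range_eq (hfinj : Injective f)
    (hexact : LinearMap.range f = LinearMap.ker g) (hA : B ⊓ LinearMap.range f = A.map f) :
    finrank k B = finrank k A + finrank k ↥(B.map g) := by
  rw [Submodule.finrank_eq_finrank_inf_ker_add_finrank_map g B, ← hexact, hA,
    (Submodule.equivMapOfInjective f hfinj A).finrank_eq]

theorem finrank_le_add_of_inf_range_eq [FiniteDimensional k P] (hfinj : Injective f)
    (hexact : LinearMap.range f = LinearMap.ker g) (hBC : B.map g ≤ C)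
    (hA : B ⊓ LinearMap.range f = A.map f) :
    finrank k B ≤ finrank k A + finrank k C := by
  rw [finrank_eq_finrank_add_finrank_map_of_inf_range_eq hfinj hexact hA]
  exact Nat.add_le_add_left (Submodule.finrank_mono hBC) _

theorem map_eq_of_inf_range_eq_of_finrank_eq [FiniteDimensional k P] (hfinj : Injective f)
    (hexact : LinearMap.range f = LinearMap.ker g) (hBC : B.map g ≤ C)
    (hA : B ⊓ LinearMap.range f = A.map f) (h : finrank k B = finrank k A + finrank k C) :
    B.map g = C :=
  Submodule.eq_of_le_of_finrank_eq hBC <| by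
    rw [finrank_eq_finrank_add_finrank_map_of_inf_range_eq hfinj hexact hA] at h
    omega

theorem finrank_inf_range_add_finrank_eq_of_map_eq (hexact : LinearMap.range f = LinearMap.ker g)
    (hC : B.map g = C) : finrank k ↥(B ⊓ LinearMap.range f) + finrank k C = finrank k B := by
  rw [Submodule.finrank_eq_finrank_inf_ker_add_finrank_map g B, ← hexact, hC]

theorem add_le_finrank_of_map_eq (hfinj : Injective f)
    (hexact : LinearMap.range f = LinearMap.ker g) (hAB : A.map f ≤ B) (hC : B.map g = C) :
    finrank k A + finrank k C ≤ finrank k B := by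
  rw [← finrank_inf_range_add_finrank_eq_of_map_eq hexact hC,
    (Submodule.equivMapOfInjective f hfinj A).finrank_eq]
  exact Nat.add_le_add_right (Submodule.finrank_mono (le_inf hAB LinearMap.map_le_range)) _

theorem inf_range_eq_map_of_map_eq_of_finrank_eq (hfinj : Injective f)
    (hexact : LinearMap.range f = LinearMap.ker g) (hAB : A.map f ≤ B) (hC : B.map g = C)
    (h : finrank k B = finrank k A + finrank k C) : B ⊓ LinearMap.range f = A.map f :=
  (Submodule.eq_of_le_of_finrank_eq (le_inf hAB LinearMap.map_le_range) <| by
    rw [← finrank_inf_range_add_finrank_eq_of_map_eq hexact hC,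
      (Submodule.equivMapOfInjective f hfinj A).finrank_eq] at h
    omega).symm

theorem inf_range_eq_map_and_map_eq_of_finrank_eq [FiniteDimensional k P] (hfinj : Injective f)
    (hexact : LinearMap.range f = LinearMap.ker g) (hAB : A.map f ≤ B) (hBC : B.map g ≤ C)
    (hs : B ⊓ LinearMap.range f = A.map f ∨ B.map g = C)
    (h : finrank k B = finrank k A + finrank k C) :
    B ⊓ LinearMap.range f = A.map f ∧ B.map g = C :=
  hs.elim (fun hA => ⟨hA, map_eq_of_inf_range_eq_of_finrank_eq hfinj hexact hBC hA h⟩)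
    (fun hC => ⟨inf_range_eq_map_of_map_eq_of_finrank_eq hfinj hexact hAB hC h, hC⟩)

end ShortExact

section StrictMaps

variable {k M N P : Type*} [Field k] [AddCommGroup M] [Module k M]
  [AddCommGroup N] [Module k N] [AddCommGroup P] [Module k P]
  {f : M →ₗ[k] N} {g : N →ₗ[k] P} {A : Submodule k M} {B B' : Submodule k N}

theorem comap_eq_of_inf_range_eq_map (hfinj : Injective f)
    (hA : B ⊓ LinearMap.range f = A.map f) : B.comap f = A := by
  ext m
  refine ⟨fun hm => ?_, fun hm => ?_⟩
  · obtain ⟨m', hm', hfm'⟩ : f m ∈ A.map f := hA ▸ ⟨hm, m, rfl⟩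
    exact hfinj hfm' ▸ hm'
  · exact (hA.ge (Submodule.mem_map_of_mem hm)).1

theorem exists_sub_mem_of_map_mem_map (hexact : LinearMap.range f = LinearMap.ker g)
    (hB' : B' ≤ B) (hA : B ⊓ LinearMap.range f = A.map f) {n : N} (hn : n ∈ B)
    (hgn : g n ∈ B'.map g) : ∃ m ∈ A, n - f m ∈ B' := by
  obtain ⟨n', hn', hgn'⟩ := hgn
  have : n - n' ∈ B ⊓ LinearMap.range f :=
    ⟨sub_mem hn (hB' hn'), hexact ▸ by simp [LinearMap.mem_ker, hgn']⟩
  obtain ⟨m, hm, hfm⟩ := hA ▸ this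
  exact ⟨m, hm, by rwa [hfm, sub_sub_cancel]⟩

end StrictMaps

theorem stmt_5_general (k M N P : Type*) [Field k]
    [AddCommGroup M] [Module k M]
    [AddCommGroup N] [Module k N] [FiniteDimensional k N]
    [AddCommGroup P] [Module k P] [FiniteDimensional k P]
    (FM : ℤ → Submodule k M) (FN : ℤ → Submodule k N) (FP : ℤ → Submodule k P)
    (hFN : ∀ i, FN (i + 1) ≤ FN i)
    (hFMtop : ∃ a : ℤ, ∀ i ≤ a, FM i = ⊤) (hFMbot : ∃ b : ℤ, ∀ i, b ≤ i → FM i = ⊥)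
    (hFNtop : ∃ a : ℤ, ∀ i ≤ a, FN i = ⊤) (hFNbot : ∃ b : ℤ, ∀ i, b ≤ i → FN i = ⊥)
    (hFPtop : ∃ a : ℤ, ∀ i ≤ a, FP i = ⊤) (hFPbot : ∃ b : ℤ, ∀ i, b ≤ i → FP i = ⊥)
    (f : M →ₗ[k] N) (g : N →ₗ[k] P)
    (hfinj : Function.Injective f) (hgsurj : Function.Surjective g)
    (hexact : LinearMap.range f = LinearMap.ker g)
    (hffil : ∀ i, (FM i).map f ≤ FN i) (hgfil : ∀ i, (FN i).map g ≤ FP i) :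
    -- if `f` is strict:
    ((∀ i, FN i ⊓ LinearMap.range f = (FM i).map f) →
      (∑ᶠ i : ℤ, i * ((finrank k (FN i) : ℤ) - (finrank k (FN (i + 1)) : ℤ)))
        ≤ (∑ᶠ i : ℤ, i * ((finrank k (FM i) : ℤ) - (finrank k (FM (i + 1)) : ℤ)))
          + (∑ᶠ i : ℤ, i * ((finrank k (FP i) : ℤ) - (finrank k (FP (i + 1)) : ℤ)))) ∧
    -- if `g` is strict:
    ((∀ i, (FN i).map g = FP i) →
      (∑ᶠ i : ℤ, i * ((finrank k (FM i) : ℤ) - (finrank k (FM (i + 1)) : ℤ)))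
          + (∑ᶠ i : ℤ, i * ((finrank k (FP i) : ℤ) - (finrank k (FP (i + 1)) : ℤ)))
        ≤ (∑ᶠ i : ℤ, i * ((finrank k (FN i) : ℤ) - (finrank k (FN (i + 1)) : ℤ)))) ∧
    -- if one of `f, g` is strict and equality holds, the sequence is exact in `Fil(k)`,
    -- i.e. `0 → gr(M) → gr(N) → gr(P) → 0` is exact:
    (((∀ i, FN i ⊓ LinearMap.range f = (FM i).map f) ∨ (∀ i, (FN i).map g = FP i)) →
      (∑ᶠ i : ℤ, i * ((finrank k (FN i) : ℤ) - (finrank k (FN (i + 1)) : ℤ)))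
          = (∑ᶠ i : ℤ, i * ((finrank k (FM i) : ℤ) - (finrank k (FM (i + 1)) : ℤ)))
            + (∑ᶠ i : ℤ, i * ((finrank k (FP i) : ℤ) - (finrank k (FP (i + 1)) : ℤ))) →
      ((∀ i : ℤ, ∀ m ∈ FM i, f m ∈ FN (i + 1) → m ∈ FM (i + 1)) ∧
       (∀ i : ℤ, ∀ n ∈ FN i, g n ∈ FP (i + 1) → ∃ m ∈ FM i, n - f m ∈ FN (i + 1)) ∧
       (∀ i : ℤ, ∀ q ∈ FP i, ∃ n ∈ FN i, q - g n ∈ FP (i + 1)))) := by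
  have hMtop := eventually_atBot.2 hFMtop
  have hNtop := eventually_atBot.2 hFNtop
  have hPtop := eventually_atBot.2 hFPtop
  have hMbot := eventually_atTop.2 hFMbot
  have hNbot := eventually_atTop.2 hFNbot
  have hPbot := eventually_atTop.2 hFPbot
  set e : ℤ → ℤ := fun i => (finrank k (FN i) : ℤ) - finrank k (FM i) - finrank k (FP i)
  have hrank := finrank_eq_finrank_add_finrank_of_exact hfinj hgsurj hexact
  have he : HasFiniteSupport e := hasFiniteSupport_finrank_sub_finrank_sub_finrank
    hMtop hMbot hNtop hNbot hPtop hPbot hrank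
  have hweight := filtrationWeight_sub_filtrationWeight_sub_filtrationWeight
    hMtop hMbot hNtop hNbot hPtop hPbot he
  unfold filtrationWeight at hweight
  have hf_nonpos (hs : ∀ i, FN i ⊓ LinearMap.range f = (FM i).map f) (i : ℤ) : e i ≤ 0 := by
    have := finrank_le_add_of_inf_range_eq hfinj hexact (hgfil i) (hs i)
    simp only [e]; omega
  have hg_nonneg (hs : ∀ i, (FN i).map g = FP i) (i : ℤ) : 0 ≤ e i := by
    have := add_le_finrank_of_map_eq hfinj hexact (hffil i) (hs i)
    simp only [e]; omega
  refine ⟨fun hs => ?_, fun hs => ?_, fun hs heq => ?_⟩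
  · linarith [finsum_nonpos (hf_nonpos hs)]
  · linarith [finsum_nonneg (hg_nonneg hs)]
  have hsum : ∑ᶠ i, e i = 0 := by linarith
  have hstrict (i : ℤ) : FN i ⊓ LinearMap.range f = (FM i).map f ∧ (FN i).map g = FP i := by
    have he_zero : e i = 0 := hs.elim
      (fun hs => eq_zero_of_finsum_eq_zero_of_nonpos he (hf_nonpos hs) hsum i)
      (fun hs => eq_zero_of_finsum_eq_zero_of_nonneg he (hg_nonneg hs) hsum i)
    exact inf_range_eq_map_and_map_eq_of_finrank_eq hfinj hexact (hffil i) (hgfil i)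
      (hs.imp (· i) (· i)) (by simp only [e] at he_zero; omega)
  refine ⟨fun i m _ hfm => ?_, fun i n hn hgn => ?_, fun i q hq => ?_⟩
  · rwa [← comap_eq_of_inf_range_eq_map hfinj (hstrict (i + 1)).1]
  · exact exists_sub_mem_of_map_mem_map hexact (hFN i) (hstrict i).1 hn
      ((hstrict (i + 1)).2 ▸ hgn)
  · obtain ⟨n, hn, rfl⟩ := (hstrict i).2 ▸ hq
    exact ⟨n, hn, by simp⟩

/-- Let `0 → M → N → P → 0` be a sequence of finite dimensional discretely
filtered `k`-vector spaces, exact as vector spaces, with both maps filtered.  If `f` is strict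
then `∑ i·dim gr^i(N) ≤ ∑ i·dim gr^i(M) + ∑ i·dim gr^i(P)`; if `g` is strict the reverse
inequality holds.  If one of `f`, `g` is strict and equality holds then the sequence
`0 → gr(M) → gr(N) → gr(P) → 0` is exact (spelled out elementwise). -/
theorem stmt_5 (k M N P : Type*) [Field k]
    [AddCommGroup M] [Module k M] [FiniteDimensional k M]
    [AddCommGroup N] [Module k N] [FiniteDimensional k N]
    [AddCommGroup P] [Module k P] [FiniteDimensional k P]
    (FM : ℤ → Submodule k M) (FN : ℤ → Submodule k N) (FP : ℤ → Submodule k P)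
    (hFM : ∀ i, FM (i + 1) ≤ FM i) (hFN : ∀ i, FN (i + 1) ≤ FN i) (hFP : ∀ i, FP (i + 1) ≤ FP i)
    (hFMtop : ∃ a : ℤ, ∀ i ≤ a, FM i = ⊤) (hFMbot : ∃ b : ℤ, ∀ i, b ≤ i → FM i = ⊥)
    (hFNtop : ∃ a : ℤ, ∀ i ≤ a, FN i = ⊤) (hFNbot : ∃ b : ℤ, ∀ i, b ≤ i → FN i = ⊥)
    (hFPtop : ∃ a : ℤ, ∀ i ≤ a, FP i = ⊤) (hFPbot : ∃ b : ℤ, ∀ i, b ≤ i → FP i = ⊥)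
    (f : M →ₗ[k] N) (g : N →ₗ[k] P)
    (hfinj : Function.Injective f) (hgsurj : Function.Surjective g)
    (hexact : LinearMap.range f = LinearMap.ker g)
    (hffil : ∀ i, (FM i).map f ≤ FN i) (hgfil : ∀ i, (FN i).map g ≤ FP i) :
    -- if `f` is strict:
    ((∀ i, FN i ⊓ LinearMap.range f = (FM i).map f) →
      (∑ᶠ i : ℤ, i * ((finrank k (FN i) : ℤ) - (finrank k (FN (i + 1)) : ℤ)))
        ≤ (∑ᶠ i : ℤ, i * ((finrank k (FM i) : ℤ) - (finrank k (FM (i + 1)) : ℤ)))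
          + (∑ᶠ i : ℤ, i * ((finrank k (FP i) : ℤ) - (finrank k (FP (i + 1)) : ℤ)))) ∧
    -- if `g` is strict:
    ((∀ i, (FN i).map g = FP i) →
      (∑ᶠ i : ℤ, i * ((finrank k (FM i) : ℤ) - (finrank k (FM (i + 1)) : ℤ)))
          + (∑ᶠ i : ℤ, i * ((finrank k (FP i) : ℤ) - (finrank k (FP (i + 1)) : ℤ)))
        ≤ (∑ᶠ i : ℤ, i * ((finrank k (FN i) : ℤ) - (finrank k (FN (i + 1)) : ℤ)))) ∧
    -- if one of `f, g` is strict and equality holds, the sequence is exact in `Fil(k)`,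
    -- i.e. `0 → gr(M) → gr(N) → gr(P) → 0` is exact:
    (((∀ i, FN i ⊓ LinearMap.range f = (FM i).map f) ∨ (∀ i, (FN i).map g = FP i)) →
      (∑ᶠ i : ℤ, i * ((finrank k (FN i) : ℤ) - (finrank k (FN (i + 1)) : ℤ)))
          = (∑ᶠ i : ℤ, i * ((finrank k (FM i) : ℤ) - (finrank k (FM (i + 1)) : ℤ)))
            + (∑ᶠ i : ℤ, i * ((finrank k (FP i) : ℤ) - (finrank k (FP (i + 1)) : ℤ))) →
      ((∀ i : ℤ, ∀ m ∈ FM i, f m ∈ FN (i + 1) → m ∈ FM (i + 1)) ∧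
       (∀ i : ℤ, ∀ n ∈ FN i, g n ∈ FP (i + 1) → ∃ m ∈ FM i, n - f m ∈ FN (i + 1)) ∧
       (∀ i : ℤ, ∀ q ∈ FP i, ∃ n ∈ FN i, q - g n ∈ FP (i + 1)))) :=
  stmt_5_general k M N P FM FN FP hFN hFMtop hFMbot hFNtop hFNbot hFPtop hFPbot f g hfinj hgsurj
    hexact hffil hgfil
end

section
/- Let K be a local field with finite residue field k of characteristic p, and let V be a continuous irreducible representation of G_K = Gal(K̄/K) on a finite dimensional F̄_p-vector space. Then V ≅ Ind_{G_L}^{G_K} χ for some unramified extension L/K of degree dim V and some continuous character χ: G_L → F̄_p^×. -/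
/-!
Since `ρ` has open kernel, the pro-`p` group `P` acts through a finite `p`-group, hence fixes a
nonzero vector; `P` being normal, its fixed space is a subrepresentation, so `P` acts trivially.
Then `I` acts through the abelian group `I / P` and has a common eigenvector, with character `e`.
Let `H` be the stabilizer of `e` under conjugation: it contains `I` and `ker ρ`, so it is open.
As `G` is topologically generated by `I` and `Frob`, `H` acts on the `e`-eigenspace through
scalars and powers of `Frob`, hence commutatively, and so has a common eigenvector `u` there, with
character `χ`. The translates of `u` by coset representatives of `G / H` are `I`-eigenvectors for
the pairwise distinct conjugates of `e`, hence linearly independent, and they span `V` by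
irreducibility; thus `[G : H] = dim V`.
-/

theorem Module.End.exists_ne_zero_forall_eq_smul_of_commute {K V ι : Type*} [Field K]
    [IsAlgClosed K] [AddCommGroup V] [Module K V] [FiniteDimensional K V] [Nontrivial V]
    (f : ι → Module.End K V) (hf : ∀ i j, Commute (f i) (f j)) :
    ∃ v : V, v ≠ 0 ∧ ∀ i, ∃ c : K, f i v = c • v := by
  induction hn : Module.finrank K V using Nat.strong_induction_on generalizing V with
  | _ n ih =>
  by_cases hscalar : ∀ i, ∃ c : K, f i = c • 1
  · obtain ⟨v, hv⟩ := exists_ne (0 : V)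
    refine ⟨v, hv, fun i => ?_⟩
    obtain ⟨c, hc⟩ := hscalar i
    exact ⟨c, by simp [hc]⟩
  push Not at hscalar
  obtain ⟨j, hj⟩ := hscalar
  obtain ⟨μ, hμ⟩ := Module.End.exists_eigenvalue (f j)
  set W := (f j).eigenspace μ
  have hW_ne_top : W ≠ ⊤ := fun htop => hj μ <| LinearMap.ext fun v => by
    simpa [sub_eq_zero] using Module.End.mem_eigenspace_iff.mp (htop ▸ Submodule.mem_top : v ∈ W)
  have hW : ∀ i, ∀ v ∈ W, f i v ∈ W := fun i v hv => by
    rw [Module.End.mem_eigenspace_iff] at hv ⊢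
    rw [← Module.End.mul_apply, (hf j i).eq, Module.End.mul_apply, hv, map_smul]
  have : Nontrivial W := Submodule.nontrivial_iff_ne_bot.mpr hμ
  obtain ⟨w, hw, hwf⟩ := ih _ (hn ▸ Submodule.finrank_lt hW_ne_top)
    (fun i => (f i).restrict (hW i))
    (fun i i' => LinearMap.ext fun w => Subtype.ext (LinearMap.congr_fun (hf i i') w)) rfl
  refine ⟨w, by simpa using hw, fun i => ?_⟩
  obtain ⟨c, hc⟩ := hwf i
  exact ⟨c, congrArg Subtype.val hc⟩

section ConjCharacter

variable {G M : Type*} [Group G] [Monoid M] (I : Subgroup G) [I.Normal]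

def conjCharacter (g : G) (e : I →* M) : I →* M :=
  e.comp (MulAut.conjNormal g⁻¹).toMonoidHom

theorem conjCharacter_apply (g : G) (e : I →* M) (σ : I) :
    conjCharacter I g e σ = e (MulAut.conjNormal g⁻¹ σ) := rfl

theorem conjCharacter_one (e : I →* M) : conjCharacter I 1 e = e := by
  ext; simp [conjCharacter_apply]

theorem conjCharacter_mul (g g' : G) (e : I →* M) :
    conjCharacter I (g * g') e = conjCharacter I g (conjCharacter I g' e) := by
  ext; simp [conjCharacter_apply]

def charStabilizer (e : I →* M) : Subgroup G where
  carrier := {g | conjCharacter I g e = e}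
  one_mem' := conjCharacter_one I e
  mul_mem' {g g'} (hg : conjCharacter I g e = e) (hg' : conjCharacter I g' e = e) := by
    change conjCharacter I (g * g') e = e
    rw [conjCharacter_mul, hg', hg]
  inv_mem' {g} (hg : conjCharacter I g e = e) := by
    change conjCharacter I g⁻¹ e = e
    conv_lhs => rw [← hg, ← conjCharacter_mul, inv_mul_cancel, conjCharacter_one]

theorem mem_charStabilizer {e : I →* M} {g : G} :
    g ∈ charStabilizer I e ↔ conjCharacter I g e = e := Iff.rfl

theorem le_charStabilizer {M : Type*} [CommMonoid M] (e : I →* M) : I ≤ charStabilizer I e :=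
  fun τ hτ => MonoidHom.ext fun σ => by
    have : MulAut.conjNormal τ⁻¹ σ = ⟨τ, hτ⟩⁻¹ * σ * ⟨τ, hτ⟩ := Subtype.ext (by simp)
    rw [conjCharacter_apply, this, map_mul, map_mul, mul_right_comm, ← map_mul, inv_mul_cancel,
      map_one, one_mul]

end ConjCharacter

open scoped Pointwise in
theorem exists_eq_zpow_mul_mul_of_dense {G : Type*} [Group G] [TopologicalSpace G]
    [IsTopologicalGroup G] {I N : Subgroup G} [I.Normal] {x : G}
    (hdense : Dense (Subgroup.closure ((I : Set G) ∪ {x}) : Set G)) (hN : IsOpen (N : Set G))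
    (g : G) : ∃ n : ℤ, ∃ σ ∈ I, ∃ m ∈ N, g = x ^ n * σ * m := by
  have hclosure : (Subgroup.closure ((I : Set G) ∪ {x}) : Set G) =
      (Subgroup.zpowers x : Set G) * (I : Set G) := by
    rw [Set.union_comm, Subgroup.closure_union, Subgroup.closure_eq, ← Subgroup.zpowers_eq_closure,
      Subgroup.mul_normal]
  obtain ⟨y, hy, hgy⟩ := hdense.exists_mem_open (hN.preimage (continuous_const_mul g⁻¹))
    ⟨g, by simp [N.one_mem]⟩
  rw [hclosure] at hy
  obtain ⟨_, ⟨n, rfl⟩, σ, hσ, rfl⟩ := hy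
  exact ⟨n, σ, hσ, _, inv_mem hgy, by group⟩

namespace Representation

variable {k G V : Type*} [Field k] [AddCommGroup V] [Module k V]

theorem linearIndependent_of_forall_eq_smul [Monoid G] (ρ : Representation k G V) {ι : Type*}
    {χ : ι → G →* k} (hχ : Function.Injective χ) {v : ι → V} (hv : ∀ i, v i ≠ 0)
    (hρ : ∀ i g, ρ g (v i) = χ i g • v i) : LinearIndependent k v := by
  classical
  rw [linearIndependent_iff']
  intro s c hsum i hi
  -- Evaluating `φ ∘ ρ g` on the relation gives a relation between the characters `χ i`.
  have hcoeff : ∀ φ : Module.Dual k V, c i * φ (v i) = 0 := fun φ => by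
    have hrel : ∑ j ∈ s, (c j * φ (v j)) • (χ j : G → k) = 0 := funext fun g => by
      have := congrArg (fun w => φ (ρ g w)) hsum
      simpa [map_sum, hρ, mul_comm, mul_left_comm] using this
    exact linearIndependent_iff'.mp ((linearIndependent_monoidHom G k).comp χ hχ) s _ hrel i hi
  have : c i • v i = 0 := (Module.forall_dual_apply_eq_zero_iff k _).mp fun φ => by
    simpa using hcoeff φ
  exact (smul_eq_zero.mp this).resolve_right (hv i)

theorem invariants_ne_bot_of_isPGroup (p : ℕ) [Fact p.Prime] [CharP k p] [Group G] [Finite G]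
    (hG : IsPGroup p G) [Nontrivial V] (ρ : Representation k G V) : ρ.invariants ≠ ⊥ := by
  obtain ⟨v, hv⟩ := exists_ne (0 : V)
  let : Module (ZMod p) V := Module.compHom V (ZMod.castHom dvd_rfl k)
  -- The `𝔽_p`-span of the orbit of `v` is a finite `G`-set of cardinality divisible by `p`.
  set W := Submodule.span (ZMod p) (Set.range fun g => ρ g v)
  have : FiniteDimensional (ZMod p) W := FiniteDimensional.span_of_finite _ (Set.finite_range _)
  have : Finite W := Module.finite_of_finite (ZMod p)
  have hW : ∀ g, ∀ w ∈ W, ρ g w ∈ W := fun g w hw => by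
    induction hw using Submodule.span_induction with
    | mem _ hy =>
      obtain ⟨g', rfl⟩ := hy
      exact Submodule.subset_span ⟨g * g', by simp⟩
    | zero => simp
    | add _ _ _ _ ha hb => simpa using W.add_mem ha hb
    | smul c a _ ha =>
      change ρ g (ZMod.castHom dvd_rfl k c • a) ∈ W
      rw [map_smul]
      exact W.smul_mem c ha
  let : MulAction G W :=
    { smul := fun g w => ⟨ρ g w, hW g w w.2⟩
      one_smul := fun w => Subtype.ext (by change ρ 1 w = w; simp)
      mul_smul := fun g g' w => Subtype.ext (by change ρ (g * g') w = ρ g (ρ g' w); simp) }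
  have hvW : v ∈ W := Submodule.subset_span ⟨1, by simp⟩
  have hp : p ∣ Nat.card W := by
    have hpv : p • (⟨v, hvW⟩ : W) = 0 := Subtype.ext <| by
      simp [← Nat.cast_smul_eq_nsmul k]
    simpa [addOrderOf_eq_prime hpv (by simpa using hv)] using addOrderOf_dvd_natCard (⟨v, hvW⟩ : W)
  obtain ⟨w, hw, hw0⟩ := hG.exists_fixed_point_of_prime_dvd_card_of_fixed_point W hp
    (a := 0) fun g => Subtype.ext (map_zero (ρ g))
  refine (Submodule.ne_bot_iff _).mpr ⟨w, fun g => ?_, fun h => hw0 (Subtype.ext h.symm)⟩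
  exact congrArg Subtype.val (hw g)

variable [Group G] (ρ : Representation k G V)

theorem commute_of_mul_mul_inv_mul_inv_mem_ker {g h : G} (hgh : g * h * g⁻¹ * h⁻¹ ∈ ρ.ker) :
    Commute (ρ g) (ρ h) := by
  rw [Commute, SemiconjBy, ← map_mul, ← map_mul, show g * h = g * h * g⁻¹ * h⁻¹ * (h * g) by group,
    map_mul, show ρ (g * h * g⁻¹ * h⁻¹) = 1 from hgh, one_mul]

theorem exists_monoidHom_forall_eq_smul {v : V} (hv : v ≠ 0)
    (h : ∀ g, ∃ c : k, ρ g v = c • v) : ∃ χ : G →* kˣ, ∀ g, ρ g v = (χ g : k) • v := by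
  choose c hc using h
  have hc0 : ∀ g, c g ≠ 0 := fun g h0 => hv <| by
    simpa [← hc, h0] using congrArg (ρ g⁻¹) (hc g)
  have hcmul : ∀ g g', c (g * g') = c g * c g' := fun g g' => smul_left_injective k hv <| by
    show c (g * g') • v = (c g * c g') • v
    rw [← hc, map_mul, Module.End.mul_apply, hc, map_smul, hc, smul_smul, mul_comm]
  exact ⟨MonoidHom.mk' (fun g => Units.mk0 (c g) (hc0 g)) fun g g' => Units.ext (hcmul g g'),
    hc⟩

theorem exists_monoidHom_forall_eq_smul_of_commute [IsAlgClosed k] [FiniteDimensional k V]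
    [Nontrivial V] (h : ∀ g g', Commute (ρ g) (ρ g')) :
    ∃ χ : G →* kˣ, ∃ v : V, v ≠ 0 ∧ ∀ g, ρ g v = (χ g : k) • v := by
  obtain ⟨v, hv, hρv⟩ := Module.End.exists_ne_zero_forall_eq_smul_of_commute _ h
  obtain ⟨χ, hχ⟩ := ρ.exists_monoidHom_forall_eq_smul hv hρv
  exact ⟨χ, v, hv, hχ⟩

def weightSpace (χ : G →* kˣ) : Submodule k V where
  carrier := {v | ∀ g, ρ g v = (χ g : k) • v}
  add_mem' ha hb g := by simp [ha g, hb g]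
  zero_mem' g := by simp
  smul_mem' c v hv g := by simp [hv g, smul_comm c]

theorem eq_of_mem_weightSpace {χ χ' : G →* kˣ} {v : V} (hv : v ≠ 0) (h : v ∈ ρ.weightSpace χ)
    (h' : v ∈ ρ.weightSpace χ') : χ = χ' :=
  MonoidHom.ext fun g => Units.ext <| smul_left_injective k hv <| (h g).symm.trans (h' g)

theorem le_ker_of_invariants_ne_bot
    (hirr : ∀ W : Submodule k V, (∀ g, ∀ v ∈ W, ρ g v ∈ W) → W = ⊥ ∨ W = ⊤)
    {N : Subgroup G} [N.Normal] (h : invariants (ρ.comp N.subtype) ≠ ⊥) : N ≤ ρ.ker := by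
  -- The `N`-invariants form a subrepresentation because `N` is normal.
  have hstable : ∀ g, ∀ v ∈ invariants (ρ.comp N.subtype),
      ρ g v ∈ invariants (ρ.comp N.subtype) := fun g v hv n => by
    have hconj : g⁻¹ * n * g ∈ N := by simpa using ‹N.Normal›.conj_mem n n.2 g⁻¹
    have := hv ⟨_, hconj⟩
    simp only [MonoidHom.coe_comp, Subgroup.coe_subtype, Function.comp_apply] at this ⊢
    rw [← Module.End.mul_apply, ← map_mul, show (n : G) * g = g * (g⁻¹ * n * g) by group,
      map_mul, Module.End.mul_apply, this]
  have htop := (hirr _ hstable).resolve_left h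
  intro n hn
  exact LinearMap.ext fun v =>
    (htop ▸ Submodule.mem_top : v ∈ invariants (ρ.comp N.subtype)) ⟨n, hn⟩

theorem le_ker_of_forall_card_quotient_eq_pow [TopologicalSpace G]
    (hker : IsOpen (ρ.ker : Set G)) (p : ℕ) [Fact p.Prime] [CharP k p] [Nontrivial V]
    (hirr : ∀ W : Submodule k V, (∀ g, ∀ v ∈ W, ρ g v ∈ W) → W = ⊥ ∨ W = ⊤)
    {P : Subgroup G} [P.Normal]
    (hP : ∀ U : Subgroup P, U.Normal → IsOpen (U : Set P) → ∃ n : ℕ, Nat.card (P ⧸ U) = p ^ n) :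
    P ≤ ρ.ker := by
  refine le_ker_of_invariants_ne_bot ρ hirr ?_
  -- `P` acts through the finite `p`-group `P / (P ∩ ker ρ)`.
  set ρP := ρ.comp P.subtype
  obtain ⟨n, hn⟩ := hP ρP.ker inferInstance (hker.preimage continuous_subtype_val)
  have : Finite (P ⧸ ρP.ker) :=
    Nat.finite_of_card_ne_zero (hn ▸ pow_ne_zero n (Fact.out : p.Prime).ne_zero)
  have hne := invariants_ne_bot_of_isPGroup p (IsPGroup.of_card hn)
    (QuotientGroup.lift ρP.ker ρP le_rfl)
  obtain ⟨v, hv, hv0⟩ := (Submodule.ne_bot_iff _).mp hne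
  exact (Submodule.ne_bot_iff _).mpr ⟨v, fun g => hv g, hv0⟩

theorem isOpen_ker_of_forall_eq_smul [TopologicalSpace G] [IsTopologicalGroup G]
    (hker : IsOpen (ρ.ker : Set G)) {χ : G →* kˣ} {v : V} (hv : v ≠ 0)
    (hχ : ∀ g, ρ g v = (χ g : k) • v) : IsOpen (χ.ker : Set G) :=
  Subgroup.isOpen_mono (fun g (hg : ρ g = 1) => Units.ext <| smul_left_injective k hv <| by
    simpa [hg] using (hχ g).symm) hker

section NormalSubgroup

variable {I : Subgroup G} [I.Normal]

theorem map_mem_weightSpace_conjCharacter {e : I →* kˣ} {v : V}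
    (hv : v ∈ weightSpace (ρ.comp I.subtype) e) (g : G) :
    ρ g v ∈ weightSpace (ρ.comp I.subtype) (conjCharacter I g e) := fun σ => by
  have := hv (MulAut.conjNormal g⁻¹ σ)
  simp only [MonoidHom.coe_comp, Subgroup.coe_subtype, Function.comp_apply,
    MulAut.conjNormal_apply, inv_inv] at this ⊢
  rw [conjCharacter_apply, ← map_smul, ← this, ← Module.End.mul_apply, ← map_mul,
    ← Module.End.mul_apply, ← map_mul]
  group

theorem ker_le_charStabilizer {e : I →* kˣ} {v : V} (hv0 : v ≠ 0)
    (hv : v ∈ weightSpace (ρ.comp I.subtype) e) : ρ.ker ≤ charStabilizer I e := fun n hn =>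
  eq_of_mem_weightSpace _ hv0 (by simpa [show ρ n = 1 from hn] using
    ρ.map_mem_weightSpace_conjCharacter hv n) hv

def weightSubrepresentation (e : I →* kˣ) :
    Subrepresentation (ρ.comp (charStabilizer I e).subtype) where
  toSubmodule := weightSpace (ρ.comp I.subtype) e
  apply_mem_toSubmodule h _ hv := by
    simpa [(mem_charStabilizer I).mp h.2] using ρ.map_mem_weightSpace_conjCharacter hv h

theorem index_charStabilizer_eq_finrank
    (hirr : ∀ W : Submodule k V, (∀ g, ∀ v ∈ W, ρ g v ∈ W) → W = ⊥ ∨ W = ⊤)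
    {e : I →* kˣ} {u : V} (hu : u ≠ 0) (huI : u ∈ weightSpace (ρ.comp I.subtype) e)
    (huH : ∀ h : charStabilizer I e, ∃ c : k, ρ h u = c • u) :
    (charStabilizer I e).index = Module.finrank k V := by
  set H := charStabilizer I e
  let b : G ⧸ H → V := fun x => ρ x.out u
  have hb0 : ∀ x, b x ≠ 0 := fun x h => hu (by simpa [b] using congrArg (ρ x.out⁻¹) h)
  have hspan : Submodule.span k (Set.range b) = ⊤ := by
    refine (hirr _ fun g v hv => ?_).resolve_left
      ((Submodule.ne_bot_iff _).mpr ⟨b (1 : G), Submodule.subset_span ⟨_, rfl⟩, hb0 _⟩)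
    refine (Submodule.span_le.mpr ?_ hv : _ ∈ (Submodule.span k (Set.range b)).comap (ρ g))
    rintro _ ⟨x, rfl⟩
    set y : G ⧸ H := QuotientGroup.mk (g * x.out)
    obtain ⟨c, hc⟩ := huH ⟨y.out⁻¹ * (g * x.out), QuotientGroup.eq.mp (QuotientGroup.out_eq' y)⟩
    have hgb : ρ g (b x) = c • b y := by
      rw [← map_smul, ← hc, ← Module.End.mul_apply, ← map_mul, ← Module.End.mul_apply, ← map_mul]
      simp
    change ρ g (b x) ∈ Submodule.span k (Set.range b)
    exact hgb ▸ Submodule.smul_mem _ c (Submodule.subset_span ⟨y, rfl⟩)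
  have hli : LinearIndependent k b := by
    have hb : ∀ x σ, ρ.comp I.subtype σ (b x) =
        (Units.coeHom k).comp (conjCharacter I x.out e) σ • b x := fun x σ =>
      ρ.map_mem_weightSpace_conjCharacter huI x.out σ
    refine linearIndependent_of_forall_eq_smul (ρ.comp I.subtype) (fun x y hxy => ?_) hb0 hb
    have hconj : conjCharacter I x.out e = conjCharacter I y.out e :=
      MonoidHom.ext fun σ => Units.ext (by simpa using DFunLike.congr_fun hxy σ)
    have hmem : y.out⁻¹ * x.out ∈ H := by
      rw [mem_charStabilizer, conjCharacter_mul, hconj, ← conjCharacter_mul, inv_mul_cancel,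
        conjCharacter_one]
    rw [← QuotientGroup.out_eq' x, ← QuotientGroup.out_eq' y]
    exact (QuotientGroup.eq.mpr hmem).symm
  rw [Subgroup.index, Module.finrank_eq_nat_card_basis (Module.Basis.mk hli hspan.ge)]

theorem commute_weightSubrepresentation {x : G}
    (hdecomp : ∀ g, ∃ n : ℤ, ∃ σ ∈ I, ∃ m ∈ ρ.ker, g = x ^ n * σ * m)
    {e : I →* kˣ} {v₀ : V} (hv₀ : v₀ ≠ 0) (hv₀e : v₀ ∈ weightSpace (ρ.comp I.subtype) e)
    (h h' : charStabilizer I e) :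
    Commute ((ρ.weightSubrepresentation e).toRepresentation h)
      ((ρ.weightSubrepresentation e).toRepresentation h') := by
  set W := ρ.weightSubrepresentation e
  have hpow : ∀ g ∈ charStabilizer I e, ∃ n : ℤ, x ^ n ∈ charStabilizer I e ∧
      ∃ c : k, ∀ v ∈ W, ρ g v = c • ρ (x ^ n) v := by
    intro g hg
    obtain ⟨n, σ, hσ, m, hm, rfl⟩ := hdecomp g
    refine ⟨n, ?_, e ⟨σ, hσ⟩, fun v hv => ?_⟩
    · rw [show x ^ n = x ^ n * σ * m * m⁻¹ * σ⁻¹ by group]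
      exact mul_mem (mul_mem hg (inv_mem (ρ.ker_le_charStabilizer hv₀ hv₀e hm)))
        (inv_mem (le_charStabilizer I e hσ))
    · rw [map_mul, map_mul, Module.End.mul_apply, Module.End.mul_apply, show ρ m = 1 from hm,
        Module.End.one_apply, ← map_smul]
      exact congrArg (ρ (x ^ n)) (hv ⟨σ, hσ⟩)
  obtain ⟨n, hn, c, hc⟩ := hpow h h.2
  obtain ⟨n', hn', c', hc'⟩ := hpow h' h'.2
  have hxW : ∀ {n : ℤ}, x ^ n ∈ charStabilizer I e → ∀ v ∈ W, ρ (x ^ n) v ∈ W := fun hn v hv =>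
    W.apply_mem_toSubmodule ⟨_, hn⟩ hv
  ext ⟨v, hv⟩
  change ρ h (ρ h' v) = ρ h' (ρ h v)
  rw [hc' v hv, hc v hv, map_smul, map_smul, hc _ (hxW hn' v hv), hc' _ (hxW hn v hv),
    smul_comm c, ← Module.End.mul_apply, ← Module.End.mul_apply,
    ((Commute.zpow_zpow_self x n n').map ρ).eq]

end NormalSubgroup

end Representation

/-- `G` plays the role of `G_K`, with `P ≤ I` its wild and full inertia subgroups and `Frob` a
Frobenius element. The open subgroups `H ⊇ I` of index `n` are exactly the `G_L` for `L/K`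
unramified of degree `n`, and for irreducible `V` the isomorphism `V ≅ Ind_{G_L}^{G_K} χ` amounts,
by Frobenius reciprocity and a dimension count, to `[G : H] = dim V` together with a nonzero
`χ`-eigenvector for `H`. -/
theorem stmt_7_general (p : ℕ) [Fact p.Prime]
    (G : Type*) [Group G] [TopologicalSpace G] [IsTopologicalGroup G]
    (P I : Subgroup G) [P.Normal] [I.Normal]
    (hProP : ∀ U : Subgroup ↥P, U.Normal → IsOpen (U : Set ↥P) →
      ∃ n : ℕ, Nat.card (↥P ⧸ U) = p ^ n)
    (htameab : ∀ g h : G, g ∈ I → h ∈ I → g * h * g⁻¹ * h⁻¹ ∈ P)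
    (Frob : G)
    (hgen : Dense (↑(Subgroup.closure ((I : Set G) ∪ {Frob})) : Set G))
    (V : Type*) [AddCommGroup V] [Module (AlgebraicClosure (ZMod p)) V]
    [FiniteDimensional (AlgebraicClosure (ZMod p)) V] [Nontrivial V]
    (ρ : Representation (AlgebraicClosure (ZMod p)) G V)
    (hρcont : IsOpen {g : G | ρ g = 1})
    (hρirr : ∀ W : Submodule (AlgebraicClosure (ZMod p)) V,
      (∀ g : G, ∀ v ∈ W, ρ g v ∈ W) → W = ⊥ ∨ W = ⊤) :
    ∃ H : Subgroup G, IsOpen (H : Set G) ∧ I ≤ H ∧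
      H.index = Module.finrank (AlgebraicClosure (ZMod p)) V ∧
      ∃ χ : ↥H →* (AlgebraicClosure (ZMod p))ˣ, IsOpen {h : ↥H | χ h = 1} ∧
        ∃ v : V, v ≠ 0 ∧ ∀ h : ↥H, ρ ↑h v = (χ h : AlgebraicClosure (ZMod p)) • v := by
  have hker : IsOpen (ρ.ker : Set G) := hρcont
  have hP : P ≤ ρ.ker := ρ.le_ker_of_forall_card_quotient_eq_pow hker p hρirr hProP
  obtain ⟨e, v₀, hv₀, hv₀e⟩ :=
    Representation.exists_monoidHom_forall_eq_smul_of_commute (ρ.comp I.subtype) fun σ τ =>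
      ρ.commute_of_mul_mul_inv_mul_inv_mem_ker (hP (htameab σ τ σ.2 τ.2))
  have hkerH := ρ.ker_le_charStabilizer hv₀ hv₀e
  set W := ρ.weightSubrepresentation e
  have : Nontrivial W.toSubmodule :=
    Submodule.nontrivial_iff_ne_bot.mpr ((Submodule.ne_bot_iff _).mpr ⟨v₀, hv₀e, hv₀⟩)
  obtain ⟨χ, u, hu, hχ⟩ := W.toRepresentation.exists_monoidHom_forall_eq_smul_of_commute
    (ρ.commute_weightSubrepresentation (exists_eq_zpow_mul_mul_of_dense hgen hker) hv₀ hv₀e)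
  have hu' : (u : V) ≠ 0 := by simpa using hu
  have hχ' : ∀ h : charStabilizer I e, ρ h u = (χ h : AlgebraicClosure (ZMod p)) • u :=
    fun h => congrArg Subtype.val (hχ h)
  refine ⟨charStabilizer I e, Subgroup.isOpen_mono hkerH hker, le_charStabilizer I e,
    ρ.index_charStabilizer_eq_finrank hρirr hu' u.2 fun h => ⟨_, hχ' h⟩, χ, ?_, u, hu', hχ'⟩
  exact Representation.isOpen_ker_of_forall_eq_smul (ρ.comp (charStabilizer I e).subtype)
    (hker.preimage continuous_subtype_val) hu' hχ'

/-- Let `K` be a local field with finite residue field `k` of characteristic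
`p`, and `V` a continuous irreducible representation of `G_K` on a finite dimensional
`F̄_p`-vector space.  Then `V ≅ Ind_{G_L}^{G_K} χ` for an unramified extension `L/K` of degree
`dim V` and a continuous character `χ : G_L → F̄_p^×`.

The structure of `G = G_K` is axiomatised: `G` is a compact topological group with closed
normal subgroups `P ≤ I` (wild and full inertia), `P` pro-`p`, the tame inertia `I/P` abelian
of pro-order prime to `p`, a Frobenius element `Frob` topologically generating `G/I`, and a
continuous splitting of `G → G/I`.  Subgroups `H ⊇ I` that are open of index `n` correspond
exactly to the `G_L` for `L/K` unramified of degree `n`; and `V ≅ Ind_{G_L}^{G_K} χ` is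
expressed (for irreducible `V`, via Frobenius reciprocity and a dimension count) by
`[G : H] = dim V` together with the existence of a nonzero `χ`-eigenvector for `H`. -/
theorem stmt_7 (p : ℕ) [Fact p.Prime]
    (G : Type*) [Group G] [TopologicalSpace G] [IsTopologicalGroup G] [CompactSpace G]
    (P I : Subgroup G) [P.Normal] [I.Normal] (hPI : P ≤ I)
    (hPclosed : IsClosed (P : Set G)) (hIclosed : IsClosed (I : Set G))
    (hProP : ∀ U : Subgroup ↥P, U.Normal → IsOpen (U : Set ↥P) →
      ∃ n : ℕ, Nat.card (↥P ⧸ U) = p ^ n)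
    (htameab : ∀ g h : G, g ∈ I → h ∈ I → g * h * g⁻¹ * h⁻¹ ∈ P)
    (htameprime : ∀ σ : G, σ ∈ I → ∀ n : ℕ, σ ^ (p ^ n) ∈ P → σ ∈ P)
    (Frob : G)
    (hgen : Dense (↑(Subgroup.closure ((I : Set G) ∪ {Frob})) : Set G))
    (s : G ⧸ I →* G) (hs : Continuous s) (hsec : ∀ x : G ⧸ I, ((s x : G) : G ⧸ I) = x)
    (V : Type*) [AddCommGroup V] [Module (AlgebraicClosure (ZMod p)) V]
    [FiniteDimensional (AlgebraicClosure (ZMod p)) V] [Nontrivial V]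
    (ρ : Representation (AlgebraicClosure (ZMod p)) G V)
    (hρcont : IsOpen {g : G | ρ g = 1})
    (hρirr : ∀ W : Submodule (AlgebraicClosure (ZMod p)) V,
      (∀ g : G, ∀ v ∈ W, ρ g v ∈ W) → W = ⊥ ∨ W = ⊤) :
    ∃ H : Subgroup G, IsOpen (H : Set G) ∧ I ≤ H ∧
      H.index = Module.finrank (AlgebraicClosure (ZMod p)) V ∧
      ∃ χ : ↥H →* (AlgebraicClosure (ZMod p))ˣ, IsOpen {h : ↥H | χ h = 1} ∧
        ∃ v : V, v ≠ 0 ∧ ∀ h : ↥H, ρ ↑h v = (χ h : AlgebraicClosure (ZMod p)) • v :=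
  stmt_7_general p G P I hProP htameab Frob hgen V ρ hρcont hρirr
end

section
/- Let l/F_p be a finite extension of degree d, and suppose integers δ_θ ≥ 0 and r_θ ∈ [0,p] indexed by θ ∈ Hom_{F_p}(l, F̄_p) satisfy p·δ_{θ∘φ} − δ_θ + r_θ ∈ [0,p] for all θ. Then δ_θ ∈ {0,1} for all θ if p > 2, and δ_θ ∈ {0,1,2} for all θ if p = 2; moreover if p = 2 and δ_{θ∘φ} = 2 for some θ, then δ_θ = 2 and r_θ = 0, and hence r_θ = 0 for all θ. -/
/-!
Write `φ` for the Frobenius of `l`, acting on embeddings by `θ ↦ θ ∘ φ`, and `δᵢ = δ_{θ ∘ φⁱ}`.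
The hypothesis gives `p δ_{i+1} - δ_i ≤ p`; weighting the `i`-th inequality by `pⁱ` and summing
over one period `φᵈ = 1` telescopes to `(pᵈ - 1) δ_θ ≤ p (pᵈ - 1) / (p - 1)`, i.e.
`(p - 1) δ_θ ≤ p`. This forces `δ_θ ≤ 1` for `p > 2` and `δ_θ ≤ 2` for `p = 2`. For `p = 2`, the
inequality at `θ` then shows that `δ_{θ ∘ φ} = 2` forces `δ_θ = 2` and `r_θ = 0`; since the
Frobenius acts transitively on the embeddings of a finite field, the value `2` propagates
backwards along the single orbit to every embedding.
-/

open Finset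

theorem Function.of_iterate_apply {α : Type*} {f : α → α} {P : α → Prop}
    (h : ∀ x, P (f x) → P x) (n : ℕ) (x : α) (hx : P (f^[n] x)) : P x := by
  induction n generalizing x with
  | zero => exact hx
  | succ n ih => exact h x (ih (f x) hx)

theorem RingHom.comp_pow_eq_iterate {R S : Type*} [Semiring R] [Semiring S] (g : R →+* S)
    (f : R →+* R) (n : ℕ) : g.comp (f ^ n) = (·.comp f)^[n] g := by
  induction n with
  | zero => rfl
  | succ n ih => rw [Function.iterate_succ_apply', ← ih, pow_succ, RingHom.mul_def,
      RingHom.comp_assoc]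

theorem sub_one_mul_le_of_isPeriodicPt {α R : Type*} [CommRing R] [LinearOrder R]
    [IsStrictOrderedRing R] {σ : α → α} {f : α → R} {p c : R} (hp : 0 ≤ p)
    (h : ∀ x, p * f (σ x) - f x ≤ c) {d : ℕ} (hd : 0 < d) {x : α}
    (hx : Function.IsPeriodicPt σ d x) : (p - 1) * f x ≤ c := by
  set a : ℕ → R := fun i => f (σ^[i] x)
  set G := ∑ i ∈ range d, p ^ i
  have hG : 0 < G := sum_pos' (fun i _ => pow_nonneg hp i) ⟨0, mem_range.2 hd, by simp⟩
  have telescope : ∑ i ∈ range d, p ^ i * (p * a (i + 1) - a i) = G * ((p - 1) * f x) := by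
    calc ∑ i ∈ range d, p ^ i * (p * a (i + 1) - a i)
        = ∑ i ∈ range d, (p ^ (i + 1) * a (i + 1) - p ^ i * a i) := by
          refine sum_congr rfl fun i _ => ?_; ring
      _ = (p ^ d - 1) * f x := by
          rw [sum_range_sub (fun i => p ^ i * a i)]
          simp only [a, hx.eq, Function.iterate_zero_apply]
          ring
      _ = G * ((p - 1) * f x) := by rw [← geom_sum_mul]; ring
  have : G * ((p - 1) * f x) ≤ G * c := by
    rw [← telescope, sum_mul]
    refine sum_le_sum fun i _ => ?_
    have step := h (σ^[i] x)
    rw [← Function.iterate_succ_apply' σ i x] at step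
    exact mul_le_mul_of_nonneg_left step (pow_nonneg hp i)
  exact le_of_mul_le_mul_left this hG

theorem FiniteField.exists_eq_comp_frobenius_pow (p : ℕ) [Fact p.Prime] {l K : Type*} [Field l]
    [Finite l] [CharP l p] [Field K] (θ₀ θ : l →+* K) :
    ∃ n : ℕ, θ = θ₀.comp (frobenius l p ^ n) := by
  have : CharP K p := charP_of_injective_ringHom θ₀.injective p
  let := ZMod.algebra l p
  let := ZMod.algebra K p
  let := θ₀.toAlgebra
  have : IsScalarTower (ZMod p) l K := .of_algebraMap_eq' (Subsingleton.elim _ _)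
  let θ' : l →ₐ[ZMod p] K :=
    ⟨θ, RingHom.congr_fun (Subsingleton.elim (θ.comp (algebraMap (ZMod p) l)) _)⟩
  -- `l / 𝔽_p` is normal, so `θ'` is `θ₀` composed with an automorphism, i.e. a Frobenius power
  obtain ⟨⟨n, _⟩, hn⟩ := (bijective_frobeniusAlgEquivOfAlgebraic_pow (ZMod p) l).2
    (Normal.algHomEquivAut (ZMod p) K l θ')
  refine ⟨n, RingHom.ext fun x => ?_⟩
  have := AlgHom.congr_fun ((Normal.algHomEquivAut (ZMod p) K l).symm_apply_apply θ') x
  rw [← hn] at this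
  simp only [Normal.algHomEquivAut_symm_apply, AlgHom.coe_comp, IsScalarTower.coe_toAlgHom',
    AlgEquiv.coe_toAlgHom, AlgEquiv.coe_pow, Function.comp_apply,
    coe_frobeniusAlgEquivOfAlgebraic_iterate, ZMod.card] at this
  rw [RingHom.comp_apply, RingHom.coe_pow, iterate_frobenius]
  exact this.symm

/-- Let `l/F_p` be a finite extension of degree `d`, and suppose integers
`δ_θ ≥ 0` and `r_θ ∈ [0,p]`, indexed by `θ ∈ Hom_{F_p}(l, F̄_p)`, satisfy
`p·δ_{θ∘φ} − δ_θ + r_θ ∈ [0,p]` for all `θ`.  Then `δ_θ ∈ {0,1}` for all `θ` if `p > 2`, and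
`δ_θ ∈ {0,1,2}` if `p = 2`; moreover if `p = 2` and `δ_{θ∘φ} = 2` for some `θ`, then `δ_θ = 2`
and `r_θ = 0`, and hence `r_θ = 0` for all `θ`.  Here `φ` is the Frobenius of `l`, acting on
embeddings by precomposition. -/
theorem stmt_19 (p : ℕ) [Fact p.Prime] (l : Type*) [Field l] [Fintype l] [CharP l p]
    (d : ℕ) (hd : 0 < d) (hcard : Fintype.card l = p ^ d)
    (δ : (l →+* AlgebraicClosure (ZMod p)) → ℕ)
    (r : (l →+* AlgebraicClosure (ZMod p)) → ℤ)
    (hr : ∀ θ : l →+* AlgebraicClosure (ZMod p), 0 ≤ r θ ∧ r θ ≤ (p : ℤ))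
    (hkey : ∀ θ : l →+* AlgebraicClosure (ZMod p),
      0 ≤ (p : ℤ) * (δ (θ.comp (frobenius l p)) : ℤ) - (δ θ : ℤ) + r θ ∧
      (p : ℤ) * (δ (θ.comp (frobenius l p)) : ℤ) - (δ θ : ℤ) + r θ ≤ (p : ℤ)) :
    (2 < p → ∀ θ : l →+* AlgebraicClosure (ZMod p), δ θ ≤ 1) ∧
    (p = 2 → ∀ θ : l →+* AlgebraicClosure (ZMod p), δ θ ≤ 2) ∧
    (p = 2 → ∀ θ : l →+* AlgebraicClosure (ZMod p),
      δ (θ.comp (frobenius l p)) = 2 → δ θ = 2 ∧ r θ = 0) ∧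
    (p = 2 → (∃ θ : l →+* AlgebraicClosure (ZMod p), δ (θ.comp (frobenius l p)) = 2) →
      ∀ θ : l →+* AlgebraicClosure (ZMod p), r θ = 0) := by
  set K := AlgebraicClosure (ZMod p)
  have hperiodic (θ : l →+* K) : Function.IsPeriodicPt (·.comp (frobenius l p)) d θ := by
    rw [Function.IsPeriodicPt, Function.IsFixedPt, ← RingHom.comp_pow_eq_iterate,
      FiniteField.frobenius_pow hcard, RingHom.one_def, RingHom.comp_id]
  have bound (θ : l →+* K) : ((p : ℤ) - 1) * δ θ ≤ p :=
    sub_one_mul_le_of_isPeriodicPt (f := fun θ => (δ θ : ℤ)) (by positivity)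
      (fun θ => by linarith [(hkey θ).2, (hr θ).1]) hd (hperiodic θ)
  have le_one (hp : 2 < p) (θ : l →+* K) : δ θ ≤ 1 := by
    have : (3 : ℤ) ≤ p := by exact_mod_cast hp
    nlinarith [bound θ]
  have le_two (hp : p = 2) (θ : l →+* K) : δ θ ≤ 2 := by
    have := bound θ
    subst hp
    push_cast at this
    omega
  have pull_back (hp : p = 2) (θ : l →+* K) (hθ : δ (θ.comp (frobenius l p)) = 2) :
      δ θ = 2 ∧ r θ = 0 := by
    have key := (hkey θ).2
    have := le_two hp θ
    have := (hr θ).1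
    subst hp
    rw [hθ] at key
    push_cast at key
    omega
  refine ⟨le_one, le_two, pull_back, ?_⟩
  rintro hp ⟨θ₀, hθ₀⟩ θ
  obtain ⟨n, hn⟩ := FiniteField.exists_eq_comp_frobenius_pow p (θ.comp (frobenius l p))
    (θ₀.comp (frobenius l p))
  have : δ (θ.comp (frobenius l p)) = 2 :=
    Function.of_iterate_apply (fun ψ hψ => (pull_back hp ψ hψ).1) n _
      (by rwa [← RingHom.comp_pow_eq_iterate, ← hn])
  exact (pull_back hp θ this).2
end
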